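/- Let 0 < ε < 1 and α, β ∈ [0,1]. Over the noiseless-feedback rewrite channel with crossover ε, let X₁ ~ Bern(α); let U = 0 if Y₁ = X₁ or X₁ = 0, and otherwise U ~ Bern(β) (with independent local randomness); and let X₂ = no-rewrite if Y₁ = X₁ or U = 1, and X₂ = X₁ otherwise. Then: P(Y₂ = 1) = ε² − 2αε² − αβε + αβε² + α; H(Y₁ | X₁) = h_b(ε); H(Y₁ | U, X₁) = (1−α)·h_b(ε) + α(1−βε)·h_b((1−β)ε/(1−βε)); H(Y₂ | U, X₁) = (1−α)·h_b(ε²) + α(1−βε)·h_b((1−β)ε²/(1−βε)); and H(Y₂ | X₁) = (1−α)·h_b(ε²) + α·h_b(ε²(1−β) + εβ). -/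
import Mathlib


open Classical

noncomputable def pOf {Ω α : Type*} [Fintype Ω] (μ : Ω → ℝ) (X : Ω → α) (x : α) : ℝ :=
  ∑ ω, if X ω = x then μ ω else 0

noncomputable def pr {Ω : Type*} [Fintype Ω] (μ : Ω → ℝ) (E : Ω → Prop) : ℝ :=
  ∑ ω, if E ω then μ ω else 0

noncomputable def KL {α : Type*} [Fintype α] (p q : α → ℝ) : ℝ :=
  ∑ x, p x * Real.logb 2 (p x / q x)

noncomputable def TV {α : Type*} [Fintype α] (p q : α → ℝ) : ℝ :=
  (∑ x, |p x - q x|) / 2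

noncomputable def Hent {Ω α : Type*} [Fintype Ω] [Fintype α] (μ : Ω → ℝ) (X : Ω → α) : ℝ :=
  -∑ x, pOf μ X x * Real.logb 2 (pOf μ X x)

noncomputable def condH {Ω α β : Type*} [Fintype Ω] [Fintype α] [Fintype β]
    (μ : Ω → ℝ) (X : Ω → α) (Y : Ω → β) : ℝ :=
  Hent μ (fun ω => (X ω, Y ω)) - Hent μ Y

noncomputable def Iinfo {Ω α β : Type*} [Fintype Ω] [Fintype α] [Fintype β]
    (μ : Ω → ℝ) (X : Ω → α) (Y : Ω → β) : ℝ :=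
  Hent μ X + Hent μ Y - Hent μ (fun ω => (X ω, Y ω))

noncomputable def hb (p : ℝ) : ℝ :=
  -(p * Real.logb 2 p) - (1 - p) * Real.logb 2 (1 - p)

noncomputable def bern (p : ℝ) : Bool → ℝ := fun b => if b then p else 1 - p

noncomputable def myL (x : ℝ) : ℝ := -(x * Real.logb 2 x)

lemma myL_mul (a b : ℝ) (ha : 0 ≤ a) (hb : 0 ≤ b) : myL (a*b) = b * myL a + a * myL b := by
  rcases eq_or_lt_of_le ha with h|h
  · simp [myL, ← h]
  rcases eq_or_lt_of_le hb with h'|h'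
  · simp [myL, ← h']
  unfold myL
  rw [Real.logb, Real.log_mul h.ne' h'.ne']
  unfold Real.logb; ring

lemma myL_div (a D : ℝ) (ha : 0 ≤ a) (hD : 0 < D) :
    D * myL (a / D) = myL a + a * Real.logb 2 D := by
  rcases eq_or_lt_of_le ha with h|h
  · simp [myL, ← h]
  unfold myL
  rw [Real.logb, Real.log_div h.ne' hD.ne']
  unfold Real.logb; field_simp; ring

lemma hb_eq (p : ℝ) : hb p = myL p + myL (1-p) := by
  unfold hb myL; ring

lemma hb_div (a b D : ℝ) (ha : 0 ≤ a) (hb' : 0 ≤ b) (hD : 0 < D) (hs : a + b = D) :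
    D * hb (a / D) = myL a + myL b - myL D := by
  have h1 : (1:ℝ) - a/D = b/D := by field_simp; linarith
  rw [hb_eq, h1, mul_add, myL_div a D ha hD, myL_div b D hb' hD]
  simp only [myL]
  linear_combination Real.logb 2 D * hs

/-- Gel'fand–Pinsker-style scheme over the noiseless-feedback rewrite
channel with crossover `0 < ε < 1`: `X₁ ~ Bern(α)`; `U = 0` if `Y₁ = X₁` or `X₁ = 0`,
otherwise `U` is an independent `Bern(β)` coin; `X₂ = no-rewrite` if `Y₁ = X₁` or `U = 1`,
and `X₂ = X₁` otherwise.  Realized on `Ω = Bool⁴` with coordinates `(X₁, E₁, C, E₂)`,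
where `C ~ Bern(β)` is the local coin.  Claimed values of `P(Y₂=1)`, `H(Y₁|X₁)`,
`H(Y₁|U,X₁)`, `H(Y₂|U,X₁)`, and `H(Y₂|X₁)`. -/
theorem stmt8 (ε α β : ℝ) (hε0 : 0 < ε) (hε1 : ε < 1)
    (hα0 : 0 ≤ α) (hα1 : α ≤ 1) (hβ0 : 0 ≤ β) (hβ1 : β ≤ 1) :
    let μ : Bool × Bool × Bool × Bool → ℝ :=
      fun ω => bern α ω.1 * bern ε ω.2.1 * bern β ω.2.2.1 * bern ε ω.2.2.2
    let X1 : Bool × Bool × Bool × Bool → Bool := fun ω => ω.1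
    let Y1 : Bool × Bool × Bool × Bool → Bool := fun ω => Bool.xor (X1 ω) ω.2.1
    let U : Bool × Bool × Bool × Bool → Bool :=
      fun ω => if Y1 ω = X1 ω ∨ X1 ω = false then false else ω.2.2.1
    let X2 : Bool × Bool × Bool × Bool → Option Bool :=
      fun ω => if Y1 ω = X1 ω ∨ U ω = true then none else some (X1 ω)
    let Y2 : Bool × Bool × Bool × Bool → Bool :=
      fun ω => match X2 ω with
        | none => Y1 ω
        | some b => Bool.xor b ω.2.2.2
    pr μ (fun ω => Y2 ω = true)
        = ε ^ 2 - 2 * α * ε ^ 2 - α * β * ε + α * β * ε ^ 2 + α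
    ∧ condH μ Y1 X1 = hb ε
    ∧ condH μ Y1 (fun ω => (U ω, X1 ω))
        = (1 - α) * hb ε + α * (1 - β * ε) * hb ((1 - β) * ε / (1 - β * ε))
    ∧ condH μ Y2 (fun ω => (U ω, X1 ω))
        = (1 - α) * hb (ε ^ 2) + α * (1 - β * ε) * hb ((1 - β) * ε ^ 2 / (1 - β * ε))
    ∧ condH μ Y2 X1 = (1 - α) * hb (ε ^ 2) + α * hb (ε ^ 2 * (1 - β) + ε * β) := by
  intro μ X1 Y1 U X2 Y2
  have hε : (0:ℝ) ≤ ε := hε0.le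
  have h1a : (0:ℝ) ≤ 1 - α := by linarith
  have h1e : (0:ℝ) ≤ 1 - ε := by linarith
  have h1pe : (0:ℝ) ≤ 1 + ε := by linarith
  have h1b : (0:ℝ) ≤ 1 - β := by linarith
  have heb : (0:ℝ) ≤ ε * β := mul_nonneg hε hβ0
  have heb1 : (0:ℝ) ≤ ε * (1 - β) := mul_nonneg hε h1b
  have hD : (0:ℝ) < 1 - β * ε := by nlinarith
  have h1peb : (0:ℝ) ≤ 1 + ε - ε * β := by nlinarith
  have hee : (0:ℝ) ≤ ε * ε := mul_nonneg hε hε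
  have he2 : (0:ℝ) ≤ ε ^ 2 := sq_nonneg ε
  have hA : (0:ℝ) ≤ (1 - ε) * (1 + ε - ε * β) := mul_nonneg h1e h1peb
  have hs : (0:ℝ) ≤ ε ^ 2 * (1 - β) + ε * β := by positivity
  -- base decompositions
  have de2 : myL (ε ^ 2) = ε * myL ε + ε * myL ε := by
    rw [sq]; exact myL_mul ε ε hε hε
  have d1e2 : myL (1 - ε ^ 2) = (1 + ε) * myL (1 - ε) + (1 - ε) * myL (1 + ε) := by
    rw [show (1:ℝ) - ε ^ 2 = (1 - ε) * (1 + ε) by ring]; exact myL_mul _ _ h1e h1pe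
  refine ⟨?_, ?_, ?_, ?_, ?_⟩
  · simp only [pr, Fintype.sum_prod_type, Fintype.sum_bool, μ, X1, Y1, U, X2, Y2, bern]
    norm_num; ring
  · -- H(Y1 | X1)
    have hJ : Hent μ (fun ω => (Y1 ω, X1 ω)) =
        myL (α*(1-ε)) + myL (α*ε) + myL ((1-α)*ε) + myL ((1-α)*(1-ε)) := by
      simp only [Hent, pOf, Fintype.sum_prod_type, Fintype.sum_bool, μ, X1, Y1, bern, myL]
      norm_num; ring_nf
    have hM : Hent μ X1 = myL α + myL (1-α) := by
      simp only [Hent, pOf, Fintype.sum_prod_type, Fintype.sum_bool, μ, X1, bern, myL]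
      norm_num; ring_nf
    rw [condH, hJ, hM, myL_mul α (1-ε) hα0 h1e, myL_mul α ε hα0 hε,
      myL_mul (1-α) ε h1a hε, myL_mul (1-α) (1-ε) h1a h1e, hb_eq]
    ring
  · -- H(Y1 | U, X1)
    have hJ : Hent μ (fun ω => (Y1 ω, (U ω, X1 ω))) =
        myL ((1-α)*(1-ε)) + myL ((1-α)*ε) + myL (α*(1-ε)) + myL (α*(ε*(1-β)))
          + myL (α*(ε*β)) := by
      simp only [Hent, pOf, Fintype.sum_prod_type, Fintype.sum_bool, μ, X1, Y1, U, bern, myL]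
      norm_num; ring_nf
    have hM : Hent μ (fun ω => (U ω, X1 ω)) =
        myL (1-α) + myL (α*(1-β*ε)) + myL (α*(ε*β)) := by
      simp only [Hent, pOf, Fintype.sum_prod_type, Fintype.sum_bool, μ, X1, Y1, U, bern, myL]
      norm_num; ring_nf
    have hd : (1-β*ε) * hb ((1-β)*ε/(1-β*ε))
        = myL ((1-β)*ε) + myL (1-ε) - myL (1-β*ε) :=
      hb_div ((1-β)*ε) (1-ε) (1-β*ε) (mul_nonneg h1b hε) h1e hD (by ring)
    have hd2 : α * (1-β*ε) * hb ((1-β)*ε/(1-β*ε))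
        = α * (myL ((1-β)*ε) + myL (1-ε) - myL (1-β*ε)) := by rw [mul_assoc, hd]
    rw [condH, hJ, hM, hd2, myL_mul (1-α) (1-ε) h1a h1e, myL_mul (1-α) ε h1a hε,
      myL_mul α (1-ε) hα0 h1e, myL_mul α (ε*(1-β)) hα0 heb1, myL_mul ε (1-β) hε h1b,
      myL_mul α (1-β*ε) hα0 hD.le, myL_mul (1-β) ε h1b hε, hb_eq]
    ring
  · -- H(Y2 | U, X1)
    have hJ : Hent μ (fun ω => (Y2 ω, (U ω, X1 ω))) =
        myL ((1-α)*((1-ε)*(1+ε))) + myL ((1-α)*(ε*ε)) + myL (α*((1-ε)*(1+ε-ε*β)))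
          + myL (α*((ε*ε)*(1-β))) + myL (α*(ε*β)) := by
      simp only [Hent, pOf, Fintype.sum_prod_type, Fintype.sum_bool, μ, X1, Y1, U, X2, Y2,
        bern, myL]
      norm_num; ring_nf
    have hM : Hent μ (fun ω => (U ω, X1 ω)) =
        myL (1-α) + myL (α*(1-β*ε)) + myL (α*(ε*β)) := by
      simp only [Hent, pOf, Fintype.sum_prod_type, Fintype.sum_bool, μ, X1, Y1, U, bern, myL]
      norm_num; ring_nf
    have hd : (1-β*ε) * hb ((1-β)*ε^2/(1-β*ε))
        = myL ((1-β)*ε^2) + myL ((1-ε)*(1+ε-ε*β)) - myL (1-β*ε) :=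
      hb_div ((1-β)*ε^2) ((1-ε)*(1+ε-ε*β)) (1-β*ε) (mul_nonneg h1b he2) hA hD (by ring)
    have hd2 : α * (1-β*ε) * hb ((1-β)*ε^2/(1-β*ε))
        = α * (myL ((1-β)*ε^2) + myL ((1-ε)*(1+ε-ε*β)) - myL (1-β*ε)) := by
      rw [mul_assoc, hd]
    rw [condH, hJ, hM, hd2, myL_mul (1-α) ((1-ε)*(1+ε)) h1a (mul_nonneg h1e h1pe),
      myL_mul (1-ε) (1+ε) h1e h1pe, myL_mul (1-α) (ε*ε) h1a hee,
      myL_mul ε ε hε hε, myL_mul α ((1-ε)*(1+ε-ε*β)) hα0 hA,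
      myL_mul (1-ε) (1+ε-ε*β) h1e h1peb, myL_mul α ((ε*ε)*(1-β)) hα0 (mul_nonneg hee h1b),
      myL_mul (ε*ε) (1-β) hee h1b, myL_mul α (1-β*ε) hα0 hD.le,
      myL_mul (1-β) (ε^2) h1b he2, hb_eq, de2, d1e2]
    linear_combination α * (1 - β) * myL_mul ε ε hε hε
  · -- H(Y2 | X1)
    have hJ : Hent μ (fun ω => (Y2 ω, X1 ω)) =
        myL ((1-α)*((1-ε)*(1+ε))) + myL ((1-α)*(ε*ε)) + myL (α*((1-ε)*(1+ε-ε*β)))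
          + myL (α*(ε^2*(1-β)+ε*β)) := by
      simp only [Hent, pOf, Fintype.sum_prod_type, Fintype.sum_bool, μ, X1, Y1, U, X2, Y2,
        bern, myL]
      norm_num; ring_nf
    have hM : Hent μ X1 = myL α + myL (1-α) := by
      simp only [Hent, pOf, Fintype.sum_prod_type, Fintype.sum_bool, μ, X1, bern, myL]
      norm_num; ring_nf
    have hbs : hb (ε^2*(1-β)+ε*β)
        = myL (ε^2*(1-β)+ε*β) + myL ((1-ε)*(1+ε-ε*β)) := by
      rw [hb_eq, show (1:ℝ) - (ε^2*(1-β)+ε*β) = (1-ε)*(1+ε-ε*β) by ring]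
    rw [condH, hJ, hM, hbs, myL_mul (1-α) ((1-ε)*(1+ε)) h1a (mul_nonneg h1e h1pe),
      myL_mul (1-ε) (1+ε) h1e h1pe, myL_mul (1-α) (ε*ε) h1a hee,
      myL_mul ε ε hε hε, myL_mul α ((1-ε)*(1+ε-ε*β)) hα0 hA,
      myL_mul α (ε^2*(1-β)+ε*β) hα0 hs, hb_eq, de2, d1e2]
    ring
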